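/- arXiv:1803.03512 — 2 statements merged into one kernel-verified Lean document; each statement's English description precedes it below -/
import Mathlib

section
/- Under assumption (A7), the largest uncensored response Z¹_max satisfies n^α(τ₀ − Z¹_max) → 0 almost surely for every α ∈ (0,1). Consequently, for any bandwidth sequence a_n → 0 with n a_n⁵ log^{−1}(n) = O(1), one has τ₀ − Z¹_max = o((n a_n)^{−3/4} log^{3/4}(n)) almost surely. -/
open MeasureTheory Filter Set ProbabilityTheory

set_option linter.unusedVariables false
set_option maxHeartbeats 1000000

noncomputable section

variable {Ω : Type*}

/-- Nadaraya–Watson weights. -/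
noncomputable def kerW (K : ℝ → ℝ) (a : ℝ) (X : ℕ → Ω → ℝ) (n j : ℕ) (x : ℝ) (ω : Ω) : ℝ :=
  K ((x - X j ω) / a) / ∑ k ∈ Finset.range n, K ((x - X k ω) / a)

/-- big-O rate `(n aₙ)^{-1/2} log^{1/2} n`. -/
noncomputable def rate12 (a : ℕ → ℝ) (n : ℕ) : ℝ := (Real.log n / ((n : ℝ) * a n)) ^ ((1:ℝ)/2)

/-- big-O rate `(n aₙ)^{-3/4} log^{3/4} n`. -/
noncomputable def rate34 (a : ℕ → ℝ) (n : ℕ) : ℝ := (Real.log n / ((n : ℝ) * a n)) ^ ((3:ℝ)/4)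

/-- The Beran estimator of the conditional distribution function (no ties). -/
noncomputable def beranQ (K : ℝ → ℝ) (a : ℝ) (X Z δ' : ℕ → Ω → ℝ) (n : ℕ) (t x : ℝ) (ω : Ω) : ℝ :=
  1 - ∏ j ∈ Finset.range n,
      if Z j ω < t ∧ δ' j ω = 1 then
        1 - kerW K a X n j x ω /
          ∑ k ∈ Finset.range n, (if Z j ω ≤ Z k ω then kerW K a X n k x ω else 0)
      else 1

/-- The largest uncensored response. -/
noncomputable def zmax1 (Z δ' : ℕ → Ω → ℝ) (n : ℕ) (ω : Ω) : ℝ :=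
  sSup {z : ℝ | ∃ j < n, δ' j ω = 1 ∧ Z j ω = z}

/-- The estimator of the cure proportion, π̂(x) = 1 - Q̂(Z¹ₘₐₓ | x). -/
noncomputable def hatPi (K : ℝ → ℝ) (a : ℝ) (X Z δ' : ℕ → Ω → ℝ) (n : ℕ) (x : ℝ) (ω : Ω) : ℝ :=
  1 - beranQ K a X Z δ' n (zmax1 Z δ' n ω) x ω


lemma summable_exp_neg_rpow {d β : ℝ} (hd : 0 < d) (hβ : 0 < β) :
    Summable (fun n : ℕ => Real.exp (-(d * (n : ℝ) ^ β))) := by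
  have h1 : Tendsto (fun x : ℝ => (x ^ β) ^ (2 / β) * Real.exp (-d * x ^ β)) atTop (nhds 0) :=
    (tendsto_rpow_mul_exp_neg_mul_atTop_nhds_zero (2 / β) d hd).comp (tendsto_rpow_atTop hβ)
  have h2 : Tendsto (fun x : ℝ => x ^ 2 * Real.exp (-(d * x ^ β))) atTop (nhds 0) := by
    refine h1.congr' ?_
    filter_upwards [eventually_gt_atTop (0:ℝ)] with x hx
    rw [← Real.rpow_mul hx.le, mul_div_cancel₀ _ (ne_of_gt hβ), neg_mul]
    norm_num [Real.rpow_natCast]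
  have h3 : Tendsto (fun n : ℕ => (n : ℝ) ^ 2 * Real.exp (-(d * (n:ℝ) ^ β))) atTop (nhds 0) :=
    h2.comp tendsto_natCast_atTop_atTop
  have h4 : ∀ᶠ n : ℕ in atTop, Real.exp (-(d * (n:ℝ) ^ β)) ≤ 1 / (n : ℝ) ^ 2 := by
    filter_upwards [h3.eventually_le_const one_pos, eventually_ge_atTop 1] with n hn hn1
    have hnpos : (0:ℝ) < (n:ℝ) ^ 2 := by positivity
    rw [le_div_iff₀ hnpos, mul_comm]
    simpa using hn
  obtain ⟨N, hN⟩ := eventually_atTop.mp h4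
  rw [← summable_nat_add_iff N]
  refine Summable.of_nonneg_of_le (fun n => (Real.exp_pos _).le)
    (fun n => hN (n + N) (Nat.le_add_left _ _)) ?_
  exact (summable_nat_add_iff N).mpr (Real.summable_one_div_nat_pow.mpr one_lt_two)


lemma lb_of_deriv {f : ℝ → ℝ} {τ c ε : ℝ} (hf : ContDiffOn ℝ 2 f (Set.Iic τ))
    (hc : ∀ u ∈ Set.Icc (τ - ε) τ, c ≤ deriv f u) {t : ℝ} (ht1 : τ - ε ≤ t) (ht2 : t < τ) :
    c * (τ - t) ≤ f τ - f t := by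
  have hcont : ContinuousOn f (Set.Icc t τ) := hf.continuousOn.mono Set.Icc_subset_Iic_self
  have hdiff : DifferentiableOn ℝ f (Set.Ioo t τ) := fun x hx =>
    (((hf.differentiableOn (by norm_num)).differentiableAt (Iic_mem_nhds hx.2)).differentiableWithinAt)
  obtain ⟨ξ, hξ, hslope⟩ := exists_deriv_eq_slope f ht2 hcont hdiff
  have hcξ := hc ξ ⟨le_trans ht1 hξ.1.le, hξ.2.le⟩
  rw [hslope] at hcξ
  have hpos : (0:ℝ) < τ - t := sub_pos.2 ht2
  calc c * (τ - t) ≤ (f τ - f t) / (τ - t) * (τ - t) :=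
        mul_le_mul_of_nonneg_right hcξ hpos.le
    _ = f τ - f t := div_mul_cancel₀ _ hpos.ne'

theorem zmax1_strong_consistency
    {Ω : Type*} [MeasurableSpace Ω] (P : Measure Ω) [IsProbabilityMeasure P]
    -- the i.i.d. data (X_j, Z_j, δ_j)
    (X Z δ' : ℕ → Ω → ℝ)
    (hmX : ∀ j, Measurable (X j)) (hmZ : ∀ j, Measurable (Z j))
    (hmδ : ∀ j, Measurable (δ' j))
    (hδ01 : ∀ j ω, δ' j ω = 0 ∨ δ' j ω = 1)
    (hindep : iIndepFun (fun j ω => (X j ω, Z j ω, δ' j ω)) P)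
    (hident : ∀ j, IdentDistrib (fun ω => (X j ω, Z j ω, δ' j ω))
      (fun ω => (X 0 ω, Z 0 ω, δ' 0 ω)) P P)
    (hXsupp : ∀ j, ∀ᵐ ω ∂P, X j ω ∈ Set.Icc (0:ℝ) 1)
    (τ₀ : ℝ)
    -- (A7): the distribution functions of Z and of Z given δ = 1
    (ρ ρ1 : ℝ → ℝ)
    (hρ : ∀ t : ℝ, (P {ω | Z 0 ω ≤ t}).toReal = ρ t)
    (hδpos : 0 < (P {ω | δ' 0 ω = 1}).toReal)
    (hρ1 : ∀ t : ℝ, (P {ω | Z 0 ω ≤ t ∧ δ' 0 ω = 1}).toReal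
      = ρ1 t * (P {ω | δ' 0 ω = 1}).toReal)
    (hA7 : ContDiffOn ℝ 2 ρ (Set.Iic τ₀) ∧ ContDiffOn ℝ 2 ρ1 (Set.Iic τ₀) ∧
      (∀ s t : ℝ, s ≤ t → t ≤ τ₀ → ∃ c > (0:ℝ), ∀ u ∈ Set.Icc s t,
        c ≤ |deriv ρ u| ∧ c ≤ |deriv ρ1 u|) ∧
      ∃ c > (0:ℝ), ∃ ε > (0:ℝ), ∀ u ∈ Set.Icc (τ₀ - ε) τ₀, c ≤ deriv ρ1 u)
    -- τ₀ is the right endpoint of the support of the uncensored responses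
    (hτ₀supp : ρ1 τ₀ = 1 ∧ ∀ t < τ₀, ρ1 t < 1)
    :
    -- n^α (τ₀ - Z¹ₘₐₓ) → 0 a.s. for every α ∈ (0,1)
    (∀ α ∈ Set.Ioo (0:ℝ) 1, ∀ᵐ ω ∂P,
      Tendsto (fun n : ℕ => (n : ℝ) ^ α * (τ₀ - zmax1 Z δ' n ω)) atTop (nhds 0)) ∧
    -- consequently τ₀ - Z¹ₘₐₓ = o((n aₙ)^{-3/4} log^{3/4} n) a.s.
    (∀ a : ℕ → ℝ, (∀ n, 0 < a n) → Tendsto a atTop (nhds 0) →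
      (∃ c : ℝ, ∀ n : ℕ, 2 ≤ n → (n : ℝ) * (a n) ^ 5 / Real.log n ≤ c) →
      ∀ᵐ ω ∂P, Tendsto (fun n : ℕ => (τ₀ - zmax1 Z δ' n ω) / rate34 a n) atTop (nhds 0)) := by
  have hρ1τ : ρ1 τ₀ = 1 := hτ₀supp.1
  have hA7b : ContDiffOn ℝ 2 ρ1 (Set.Iic τ₀) := hA7.2.1
  have hA7d : ∃ c > (0:ℝ), ∃ ε > (0:ℝ), ∀ u ∈ Set.Icc (τ₀ - ε) τ₀, c ≤ deriv ρ1 u := hA7.2.2.2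
  set W : ℕ → Ω → ℝ × ℝ × ℝ := fun j ω => (X j ω, Z j ω, δ' j ω) with hW
  have hmW : ∀ j, Measurable (W j) := fun j => (hmX j).prod ((hmZ j).prod (hmδ j))
  set pδ : ℝ := (P {ω | δ' 0 ω = 1}).toReal with hpδ
  -- the event sets
  set S : ℝ → Set (ℝ × ℝ × ℝ) := fun t => {p | p.2.2 = 1 ∧ t < p.2.1 ∧ p.2.1 ≤ τ₀} with hSdef
  have hS : ∀ t, MeasurableSet (S t) := by
    intro t
    exact (measurableSet_eq_fun (measurable_snd.snd) measurable_const).inter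
      ((measurableSet_lt measurable_const measurable_snd.fst).inter
        (measurableSet_le measurable_snd.fst measurable_const))
  -- basic measurable sets
  have hmA : ∀ t : ℝ, MeasurableSet {ω | Z 0 ω ≤ t ∧ δ' 0 ω = 1} := fun t =>
    (measurableSet_le (hmZ 0) measurable_const).inter
      (measurableSet_eq_fun (hmδ 0) measurable_const)
  have hmD : MeasurableSet {ω | δ' 0 ω = 1} :=
    measurableSet_eq_fun (hmδ 0) measurable_const
  -- identification of the event probability
  have hq : ∀ t ≤ τ₀, (P (W 0 ⁻¹' S t)).toReal = (1 - ρ1 t) * pδ := by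
    intro t ht
    have hset : W 0 ⁻¹' S t
        = {ω | Z 0 ω ≤ τ₀ ∧ δ' 0 ω = 1} \ {ω | Z 0 ω ≤ t ∧ δ' 0 ω = 1} := by
      ext ω
      simp only [mem_preimage, hSdef, mem_setOf_eq, mem_diff, hW]
      constructor
      · rintro ⟨h1, h2, h3⟩
        exact ⟨⟨h3, h1⟩, fun h => absurd h.1 (not_le.2 h2)⟩
      · rintro ⟨⟨h3, h1⟩, h2⟩
        refine ⟨h1, ?_, h3⟩
        by_contra h
        exact h2 ⟨not_lt.1 h, h1⟩
    have hsub : {ω | Z 0 ω ≤ t ∧ δ' 0 ω = 1} ⊆ {ω | Z 0 ω ≤ τ₀ ∧ δ' 0 ω = 1} :=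
      fun ω hω => ⟨hω.1.trans ht, hω.2⟩
    rw [hset, measure_diff hsub (hmA t).nullMeasurableSet (measure_ne_top _ _),
      ENNReal.toReal_sub_of_le (measure_mono hsub) (measure_ne_top _ _), hρ1 t, hρ1 τ₀, hρ1τ]
    ring
  -- product over independent coordinates
  have hprod : ∀ (t : ℝ) (n : ℕ),
      P (⋂ j ∈ Finset.range n, (W j ⁻¹' S t)ᶜ) = (P ((W 0 ⁻¹' S t)ᶜ)) ^ n := by
    intro t n
    have := hindep.meas_biInter (S := Finset.range n) (s := fun j => (W j ⁻¹' S t)ᶜ)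
      (fun j _ => ⟨(S t)ᶜ, (hS t).compl, by rw [Set.preimage_compl]⟩)
    rw [this]
    have heq : ∀ j, P ((W j ⁻¹' S t)ᶜ) = P ((W 0 ⁻¹' S t)ᶜ) := by
      intro j
      have := (hident j).measure_mem_eq (s := (S t)ᶜ) (hS t).compl
      simpa [Set.preimage_compl] using this
    rw [Finset.prod_congr rfl (fun j _ => heq j), Finset.prod_const, Finset.card_range]
  -- complement probability
  have hcompl : ∀ t ≤ τ₀, P ((W 0 ⁻¹' S t)ᶜ) = ENNReal.ofReal (1 - (1 - ρ1 t) * pδ) := by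
    intro t ht
    have hmeas : MeasurableSet (W 0 ⁻¹' S t) := (hS t).preimage (hmW 0)
    rw [prob_compl_eq_one_sub hmeas]
    rw [← ENNReal.ofReal_toReal (a := 1 - P (W 0 ⁻¹' S t)) (by
      exact ne_top_of_le_ne_top ENNReal.one_ne_top tsub_le_self)]
    congr 1
    rw [ENNReal.toReal_sub_of_le prob_le_one ENNReal.one_ne_top, ENNReal.toReal_one, hq t ht]
  -- a.s. all uncensored responses are ≤ τ₀
  have hZle : ∀ᵐ ω ∂P, ∀ j, δ' j ω = 1 → Z j ω ≤ τ₀ := by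
    rw [ae_all_iff]
    intro j
    set T : Set (ℝ × ℝ × ℝ) := {p | p.2.2 = 1 ∧ τ₀ < p.2.1} with hTdef
    have hT : MeasurableSet T :=
      (measurableSet_eq_fun (measurable_snd.snd) measurable_const).inter
        (measurableSet_lt measurable_const measurable_snd.fst)
    have h0 : P (W 0 ⁻¹' T) = 0 := by
      have hset : W 0 ⁻¹' T
          = {ω | δ' 0 ω = 1} \ {ω | Z 0 ω ≤ τ₀ ∧ δ' 0 ω = 1} := by
        ext ω
        simp only [mem_preimage, hTdef, mem_setOf_eq, mem_diff, hW]
        constructor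
        · rintro ⟨h1, h2⟩
          exact ⟨h1, fun h => absurd h.1 (not_le.2 h2)⟩
        · rintro ⟨h1, h2⟩
          refine ⟨h1, ?_⟩
          by_contra h
          exact h2 ⟨not_lt.1 h, h1⟩
      have hsub : {ω | Z 0 ω ≤ τ₀ ∧ δ' 0 ω = 1} ⊆ {ω | δ' 0 ω = 1} := fun ω hω => hω.2
      have hmeq : P {ω | Z 0 ω ≤ τ₀ ∧ δ' 0 ω = 1} = P {ω | δ' 0 ω = 1} := by
        have h1 := hρ1 τ₀
        rw [hρ1τ, one_mul] at h1
        exact (ENNReal.toReal_eq_toReal_iff' (measure_ne_top _ _) (measure_ne_top _ _)).mp h1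
      rw [hset, measure_diff hsub (hmA τ₀).nullMeasurableSet (measure_ne_top _ _), hmeq,
        tsub_self]
    have hj : P (W j ⁻¹' T) = 0 := by
      rw [(hident j).measure_mem_eq hT]
      exact h0
    have : ∀ᵐ ω ∂P, ω ∉ W j ⁻¹' T := by
      rw [ae_iff]
      simp only [not_not]; exact hj
    filter_upwards [this] with ω hω hδ1
    by_contra h
    exact hω ⟨hδ1, not_le.1 h⟩
  -- THE KEY LEMMA
  have key : ∀ ε : ℝ, 0 < ε → ∀ α : ℝ, α ∈ Set.Ioo (0:ℝ) 1 → ∀ᵐ ω ∂P, ∀ᶠ n : ℕ in atTop,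
      0 ≤ τ₀ - zmax1 Z δ' n ω ∧ τ₀ - zmax1 Z δ' n ω < ε * (n:ℝ) ^ (-α) := by
    intro ε hε α hα
    obtain ⟨c₀, hc₀, ε₀, hε₀, hcb⟩ := hA7d
    set t' : ℕ → ℝ := fun n => τ₀ - ε * (n:ℝ) ^ (-α) with ht'
    have htend : Tendsto (fun n : ℕ => ε * (n:ℝ) ^ (-α)) atTop (nhds 0) := by
      have h0 : Tendsto (fun n : ℕ => ((n:ℝ)) ^ (-α)) atTop (nhds 0) :=
        (tendsto_rpow_neg_atTop hα.1).comp tendsto_natCast_atTop_atTop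
      simpa using h0.const_mul ε
    obtain ⟨N, hN⟩ := eventually_atTop.mp
      ((htend.eventually_le_const hε₀).and (eventually_ge_atTop 1))
    set d : ℝ := c₀ * ε * pδ with hd
    have hδpδ : 0 < pδ := hδpos
    have hdpos : 0 < d := by positivity
    have hbound : ∀ n, N ≤ n → P (⋂ j ∈ Finset.range n, (W j ⁻¹' S (t' n))ᶜ)
        ≤ ENNReal.ofReal (Real.exp (-(d * (n:ℝ) ^ (1 - α)))) := by
      intro n hn
      obtain ⟨h1, h2⟩ := hN n hn
      have hnpos : (0:ℝ) < (n:ℝ) := by exact_mod_cast h2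
      have hδn : 0 < ε * (n:ℝ) ^ (-α) := mul_pos hε (Real.rpow_pos_of_pos hnpos _)
      have ht2 : t' n < τ₀ := by simp only [ht']; linarith
      have ht1 : τ₀ - ε₀ ≤ t' n := by simp only [ht']; linarith
      have hqlb : c₀ * (ε * (n:ℝ) ^ (-α)) ≤ 1 - ρ1 (t' n) := by
        have hlb := lb_of_deriv hA7b hcb ht1 ht2
        rw [hρ1τ] at hlb
        have : τ₀ - t' n = ε * (n:ℝ) ^ (-α) := by simp [ht']
        rw [this] at hlb
        linarith
      rw [hprod, hcompl _ ht2.le]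
      have hq1 : (1 : ℝ) - (1 - ρ1 (t' n)) * pδ ≤ Real.exp (-((1 - ρ1 (t' n)) * pδ)) := by
        have := Real.add_one_le_exp (-((1 - ρ1 (t' n)) * pδ)); linarith
      calc (ENNReal.ofReal (1 - (1 - ρ1 (t' n)) * pδ)) ^ n
          ≤ (ENNReal.ofReal (Real.exp (-((1 - ρ1 (t' n)) * pδ)))) ^ n :=
            pow_le_pow_left₀ (by simp) (ENNReal.ofReal_le_ofReal hq1) n
        _ = ENNReal.ofReal (Real.exp (-((1 - ρ1 (t' n)) * pδ)) ^ n) := by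
            rw [ENNReal.ofReal_pow (Real.exp_pos _).le]
        _ = ENNReal.ofReal (Real.exp ((n:ℝ) * (-((1 - ρ1 (t' n)) * pδ)))) := by
            rw [Real.exp_nat_mul]
        _ ≤ ENNReal.ofReal (Real.exp (-(d * (n:ℝ) ^ (1 - α)))) := by
            apply ENNReal.ofReal_le_ofReal
            apply Real.exp_le_exp.mpr
            have hsplit : (n:ℝ) ^ ((1:ℝ) - α) = (n:ℝ) * (n:ℝ) ^ (-α) := by
              have he : (1:ℝ) - α = 1 + (-α) := by ring
              rw [he, Real.rpow_add hnpos, Real.rpow_one]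
            rw [hsplit]
            have hstep : d * (n:ℝ) ^ (-α) ≤ (1 - ρ1 (t' n)) * pδ := by
              have h3 : c₀ * (ε * (n:ℝ) ^ (-α)) * pδ ≤ (1 - ρ1 (t' n)) * pδ :=
                mul_le_mul_of_nonneg_right hqlb hδpδ.le
              calc d * (n:ℝ) ^ (-α) = c₀ * (ε * (n:ℝ) ^ (-α)) * pδ := by rw [hd]; ring
                _ ≤ (1 - ρ1 (t' n)) * pδ := h3
            nlinarith [mul_le_mul_of_nonneg_left hstep hnpos.le]
    -- Borel--Cantelli
    have hsum : ∑' n : ℕ,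
        P (⋂ j ∈ Finset.range (n + N), (W j ⁻¹' S (t' (n + N)))ᶜ) ≠ ⊤ := by
      have h1α : (0:ℝ) < 1 - α := by linarith [hα.2]
      have hb : Summable (fun n : ℕ => Real.exp (-(d * ((n + N : ℕ):ℝ) ^ ((1:ℝ) - α)))) :=
        (summable_nat_add_iff N).mpr (summable_exp_neg_rpow hdpos h1α)
      have hle : ∑' n : ℕ, P (⋂ j ∈ Finset.range (n + N), (W j ⁻¹' S (t' (n + N)))ᶜ)
          ≤ ∑' n : ℕ, ENNReal.ofReal (Real.exp (-(d * ((n + N : ℕ):ℝ) ^ ((1:ℝ) - α)))) :=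
        ENNReal.tsum_le_tsum (fun n => hbound (n + N) (Nat.le_add_left _ _))
      have heq : ∑' n : ℕ, ENNReal.ofReal (Real.exp (-(d * ((n + N : ℕ):ℝ) ^ ((1:ℝ) - α))))
          = ENNReal.ofReal (∑' n : ℕ, Real.exp (-(d * ((n + N : ℕ):ℝ) ^ ((1:ℝ) - α)))) :=
        (ENNReal.ofReal_tsum_of_nonneg (fun n => (Real.exp_pos _).le) hb).symm
      rw [heq] at hle
      exact ne_top_of_le_ne_top ENNReal.ofReal_ne_top hle
    have hBC := measure_limsup_atTop_eq_zero hsum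
    have hae : ∀ᵐ ω ∂P, ∀ᶠ n in atTop,
        ω ∉ ⋂ j ∈ Finset.range (n + N), (W j ⁻¹' S (t' (n + N)))ᶜ := by
      have hnot : ∀ᵐ ω ∂P,
          ω ∉ limsup (fun n => ⋂ j ∈ Finset.range (n + N), (W j ⁻¹' S (t' (n + N)))ᶜ) atTop := by
        rw [ae_iff]; simpa using hBC
      filter_upwards [hnot] with ω hω
      have hf : ¬ ∃ᶠ n in atTop,
          ω ∈ ⋂ j ∈ Finset.range (n + N), (W j ⁻¹' S (t' (n + N)))ᶜ :=
        fun hf => hω (mem_limsup_iff_frequently_mem.mpr hf)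
      exact not_frequently.mp hf
    filter_upwards [hae, hZle] with ω hω hceil
    obtain ⟨M, hM⟩ := eventually_atTop.mp hω
    rw [eventually_atTop]
    refine ⟨M + N + 1, fun n hn => ?_⟩
    have hnN : N ≤ n := by omega
    have h1 : ω ∉ ⋂ j ∈ Finset.range n, (W j ⁻¹' S (t' n))ᶜ := by
      have hM' := hM (n - N) (by omega)
      rwa [Nat.sub_add_cancel hnN] at hM'
    simp only [Set.mem_iInter, Set.mem_compl_iff, not_forall, not_not] at h1
    obtain ⟨j, hjn, hj⟩ := h1
    have hjn' : j < n := Finset.mem_range.mp hjn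
    simp only [mem_preimage, hSdef, mem_setOf_eq, hW] at hj
    obtain ⟨hjδ, hjt, hjτ⟩ := hj
    set s : Set ℝ := {z | ∃ i < n, δ' i ω = 1 ∧ Z i ω = z} with hs
    have hmem : Z j ω ∈ s := ⟨j, hjn', hjδ, rfl⟩
    have hbdd : ∀ z ∈ s, z ≤ τ₀ := by
      rintro z ⟨i, _, hi1, rfl⟩; exact hceil i hi1
    have hzm : zmax1 Z δ' n ω = sSup s := rfl
    have hub : zmax1 Z δ' n ω ≤ τ₀ := by
      rw [hzm]; exact csSup_le ⟨_, hmem⟩ hbdd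
    have hlb : Z j ω ≤ zmax1 Z δ' n ω := by
      rw [hzm]; exact le_csSup ⟨τ₀, hbdd⟩ hmem
    have htlt : τ₀ - ε * (n:ℝ) ^ (-α) < Z j ω := hjt
    exact ⟨by linarith, by linarith⟩
  -- Part 1
  have part1 : ∀ α ∈ Set.Ioo (0:ℝ) 1, ∀ᵐ ω ∂P,
      Tendsto (fun n : ℕ => (n : ℝ) ^ α * (τ₀ - zmax1 Z δ' n ω)) atTop (nhds 0) := by
    intro α hα
    have hae : ∀ᵐ ω ∂P, ∀ k : ℕ, ∀ᶠ n : ℕ in atTop,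
        0 ≤ τ₀ - zmax1 Z δ' n ω ∧
          τ₀ - zmax1 Z δ' n ω < (1 / ((k:ℝ) + 1)) * (n:ℝ) ^ (-α) :=
      ae_all_iff.mpr (fun k => key (1 / ((k:ℝ) + 1)) (by positivity) α hα)
    filter_upwards [hae] with ω hω
    rw [Metric.tendsto_atTop]
    intro ε' hε'
    obtain ⟨k, hk⟩ := exists_nat_one_div_lt hε'
    obtain ⟨N, hN⟩ := eventually_atTop.mp (hω k)
    refine ⟨max N 1, fun n hn => ?_⟩
    have hn1 : 1 ≤ n := le_trans (le_max_right _ _) hn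
    have hnN : N ≤ n := le_trans (le_max_left _ _) hn
    obtain ⟨h0, h1⟩ := hN n hnN
    have hnpos : (0:ℝ) < (n:ℝ) := by exact_mod_cast hn1
    have hrpos : (0:ℝ) < (n:ℝ) ^ α := Real.rpow_pos_of_pos hnpos α
    rw [Real.dist_0_eq_abs, abs_of_nonneg (mul_nonneg hrpos.le h0)]
    have hmul : (n:ℝ) ^ α * (τ₀ - zmax1 Z δ' n ω)
        < (n:ℝ) ^ α * ((1 / ((k:ℝ) + 1)) * (n:ℝ) ^ (-α)) :=
      mul_lt_mul_of_pos_left h1 hrpos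
    have hid : (n:ℝ) ^ α * ((1 / ((k:ℝ) + 1)) * (n:ℝ) ^ (-α)) = 1 / ((k:ℝ) + 1) := by
      rw [Real.rpow_neg hnpos.le]
      field_simp
    rw [hid] at hmul
    linarith
  refine ⟨part1, ?_⟩
  -- Part 2
  intro a ha hatend hcbd
  obtain ⟨c, hc⟩ := hcbd
  have hcpos : (0:ℝ) < c := by
    have ha2 := ha 2
    have h2 : (0:ℝ) < ((2:ℕ):ℝ) * a 2 ^ 5 / Real.log ((2:ℕ):ℝ) := by
      apply div_pos (by positivity)
      rw [Nat.cast_ofNat]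
      exact Real.log_pos (by norm_num)
    exact lt_of_lt_of_le h2 (hc 2 le_rfl)
  have hα45 : (4:ℝ)/5 ∈ Set.Ioo (0:ℝ) 1 := by norm_num
  have hg := part1 ((4:ℝ)/5) hα45
  have hpos : ∀ᵐ ω ∂P, ∀ᶠ n : ℕ in atTop, 0 ≤ τ₀ - zmax1 Z δ' n ω :=
    (key 1 one_pos ((4:ℝ)/5) hα45).mono (fun ω h => h.mono fun n hn => hn.1)
  filter_upwards [hg, hpos] with ω hgω hposω
  set C : ℝ := c ^ ((3:ℝ)/20) with hC
  have hCpos : 0 < C := Real.rpow_pos_of_pos hcpos _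
  have hupper : Tendsto (fun n : ℕ => C * ((n:ℝ) ^ ((4:ℝ)/5) * (τ₀ - zmax1 Z δ' n ω)))
      atTop (nhds 0) := by
    simpa using hgω.const_mul C
  refine tendsto_of_tendsto_of_tendsto_of_le_of_le' tendsto_const_nhds hupper ?_ ?_
  · -- lower bound 0
    filter_upwards [hposω, eventually_ge_atTop 3] with n h0 hn3
    have hnpos : (0:ℝ) < (n:ℝ) := by
      have : (0:ℕ) < n := by omega
      exact_mod_cast this
    have hL1 : (1:ℝ) ≤ Real.log n := by
      rw [Real.le_log_iff_exp_le hnpos]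
      calc Real.exp 1 ≤ 2.7182818286 := Real.exp_one_lt_d9.le
        _ ≤ 3 := by norm_num
        _ ≤ (n:ℝ) := by exact_mod_cast hn3
    have hLpos : (0:ℝ) < Real.log n := by linarith
    have hna : (0:ℝ) < (n:ℝ) * a n := mul_pos hnpos (ha n)
    have hxpos : (0:ℝ) < Real.log n / ((n:ℝ) * a n) := div_pos hLpos hna
    have h5 : 1 / (c * (n:ℝ) ^ 4) ≤ (Real.log n / ((n:ℝ) * a n)) ^ (5:ℕ) := by
      have hnc : (n:ℝ) * a n ^ 5 ≤ c * Real.log n := by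
        have h := hc n (by omega)
        rwa [div_le_iff₀ hLpos] at h
      have hcL : (n:ℝ) * a n ^ 5 ≤ c * Real.log n ^ 5 := by
        refine hnc.trans ?_
        have h4 : (1:ℝ) ≤ Real.log n ^ 4 := one_le_pow₀ hL1
        nlinarith [hcpos.le, mul_le_mul_of_nonneg_left h4 hLpos.le]
      rw [div_pow, div_le_div_iff₀ (by positivity) (by positivity), one_mul, mul_pow]
      nlinarith [mul_le_mul_of_nonneg_left hcL (by positivity : (0:ℝ) ≤ (n:ℝ) ^ 4)]
    have hroot : (1 / (c * (n:ℝ) ^ 4)) ^ ((1:ℝ)/5) ≤ Real.log n / ((n:ℝ) * a n) := by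
      have h := Real.rpow_le_rpow (by positivity) h5 (by norm_num : (0:ℝ) ≤ 1/5)
      rwa [← Real.rpow_natCast (Real.log n / ((n:ℝ) * a n)) 5, ← Real.rpow_mul hxpos.le,
        (by norm_num : ((5:ℕ):ℝ) * (1/5) = 1), Real.rpow_one] at h
    have hrate : (1 / (c * (n:ℝ) ^ 4)) ^ ((3:ℝ)/20) ≤ rate34 a n := by
      have h := Real.rpow_le_rpow (by positivity) hroot (by norm_num : (0:ℝ) ≤ 3/4)
      rwa [← Real.rpow_mul (by positivity), (by norm_num : (1:ℝ)/5 * (3/4) = 3/20)] at h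
    have hv : (0:ℝ) < (1 / (c * (n:ℝ) ^ 4)) ^ ((3:ℝ)/20) :=
      Real.rpow_pos_of_pos (by positivity) _
    exact div_nonneg h0 (lt_of_lt_of_le hv hrate).le
  · filter_upwards [hposω, eventually_ge_atTop 3] with n h0 hn3
    have hnpos : (0:ℝ) < (n:ℝ) := by
      have : (0:ℕ) < n := by omega
      exact_mod_cast this
    have hL1 : (1:ℝ) ≤ Real.log n := by
      rw [Real.le_log_iff_exp_le hnpos]
      calc Real.exp 1 ≤ 2.7182818286 := Real.exp_one_lt_d9.le
        _ ≤ 3 := by norm_num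
        _ ≤ (n:ℝ) := by exact_mod_cast hn3
    have hLpos : (0:ℝ) < Real.log n := by linarith
    have hna : (0:ℝ) < (n:ℝ) * a n := mul_pos hnpos (ha n)
    have hxpos : (0:ℝ) < Real.log n / ((n:ℝ) * a n) := div_pos hLpos hna
    have h5 : 1 / (c * (n:ℝ) ^ 4) ≤ (Real.log n / ((n:ℝ) * a n)) ^ (5:ℕ) := by
      have hnc : (n:ℝ) * a n ^ 5 ≤ c * Real.log n := by
        have h := hc n (by omega)
        rwa [div_le_iff₀ hLpos] at h
      have hcL : (n:ℝ) * a n ^ 5 ≤ c * Real.log n ^ 5 := by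
        refine hnc.trans ?_
        have h4 : (1:ℝ) ≤ Real.log n ^ 4 := one_le_pow₀ hL1
        nlinarith [hcpos.le, mul_le_mul_of_nonneg_left h4 hLpos.le]
      rw [div_pow, div_le_div_iff₀ (by positivity) (by positivity), one_mul, mul_pow]
      nlinarith [mul_le_mul_of_nonneg_left hcL (by positivity : (0:ℝ) ≤ (n:ℝ) ^ 4)]
    have hroot : (1 / (c * (n:ℝ) ^ 4)) ^ ((1:ℝ)/5) ≤ Real.log n / ((n:ℝ) * a n) := by
      have h := Real.rpow_le_rpow (by positivity) h5 (by norm_num : (0:ℝ) ≤ 1/5)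
      rwa [← Real.rpow_natCast (Real.log n / ((n:ℝ) * a n)) 5, ← Real.rpow_mul hxpos.le,
        (by norm_num : ((5:ℕ):ℝ) * (1/5) = 1), Real.rpow_one] at h
    have hrate : (1 / (c * (n:ℝ) ^ 4)) ^ ((3:ℝ)/20) ≤ rate34 a n := by
      have h := Real.rpow_le_rpow (by positivity) hroot (by norm_num : (0:ℝ) ≤ 3/4)
      rwa [← Real.rpow_mul (by positivity), (by norm_num : (1:ℝ)/5 * (3/4) = 3/20)] at h
    have hv : (0:ℝ) < (1 / (c * (n:ℝ) ^ 4)) ^ ((3:ℝ)/20) :=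
      Real.rpow_pos_of_pos (by positivity) _
    have hn1 : (1:ℝ) ≤ (n:ℝ) := by exact_mod_cast (by omega : 1 ≤ n)
    calc (τ₀ - zmax1 Z δ' n ω) / rate34 a n
        ≤ (τ₀ - zmax1 Z δ' n ω) / (1 / (c * (n:ℝ) ^ 4)) ^ ((3:ℝ)/20) :=
          div_le_div_of_nonneg_left h0 hv hrate
      _ = (τ₀ - zmax1 Z δ' n ω) * (c * (n:ℝ) ^ 4) ^ ((3:ℝ)/20) := by
          rw [one_div, Real.inv_rpow (by positivity), div_eq_mul_inv, inv_inv]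
      _ = (τ₀ - zmax1 Z δ' n ω) * (C * (n:ℝ) ^ ((3:ℝ)/5)) := by
          rw [Real.mul_rpow hcpos.le (by positivity), ← Real.rpow_natCast (n:ℝ) 4,
            ← Real.rpow_mul hnpos.le, (by norm_num : ((4:ℕ):ℝ) * (3/20) = 3/5), hC]
      _ ≤ (τ₀ - zmax1 Z δ' n ω) * (C * (n:ℝ) ^ ((4:ℝ)/5)) := by
          have hexp : (n:ℝ) ^ ((3:ℝ)/5) ≤ (n:ℝ) ^ ((4:ℝ)/5) :=
            Real.rpow_le_rpow_of_exponent_le hn1 (by norm_num)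
          have := mul_le_mul_of_nonneg_left hexp hCpos.le
          exact mul_le_mul_of_nonneg_left this h0
      _ = C * ((n:ℝ) ^ ((4:ℝ)/5) * (τ₀ - zmax1 Z δ' n ω)) := by ring
end
end

section
/- Let τ₀ ∈ ℝ and let L : (−∞, τ₀] → ℝ be nondecreasing and twice differentiable, satisfying the curvature condition (★). Let {u_n} and {v_n} be real sequences with u_n → u and v_n → v (and v_n − v ≠ −1 for all n). Then sup_{−∞ < t ≤ τ₀} |L(t + t(v_n − v) + (u_n − u)) − L(t)| = O(|v_n − v| + |u_n − u|); that is, there exist C > 0 and N such that for all n ≥ N, sup_{−∞ < t ≤ τ₀} |L(t + t(v_n − v) + (u_n − u)) − L(t)| ≤ C(|v_n − v| + |u_n − u|). -/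
open MeasureTheory Filter Set ProbabilityTheory

set_option linter.unusedVariables false
set_option maxHeartbeats 1000000

noncomputable section

theorem curvature_uniform_perturbation_bound (τ₀ : ℝ) (L L' L'' : ℝ → ℝ)
    (hmono : MonotoneOn L (Set.Iic τ₀))
    (hder : ∀ t ≤ τ₀, HasDerivAt L (L' t) t ∧ HasDerivAt L' (L'' t) t)
    -- curvature condition (★)
    (h1 : IntegrableOn (fun w => (1 + w ^ 2) * (L'' w / L' w) ^ 2 * L' w) (Set.Iic τ₀))
    (h2 : IntegrableOn (fun w => (1 + w ^ 2) * L' w) (Set.Iic τ₀))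
    (h3 : ∃ c : ℝ, ∀ t ≤ τ₀, |t * L' t| ≤ c)
    (u v : ℕ → ℝ) (u₀ v₀ : ℝ)
    (hu : Tendsto u atTop (nhds u₀)) (hv : Tendsto v atTop (nhds v₀))
    (hvne : ∀ n, v n - v₀ ≠ -1)
    -- the perturbed argument stays in the domain for n large
    (hdom : ∃ N₀ : ℕ, ∀ n ≥ N₀, ∀ t ≤ τ₀, t + t * (v n - v₀) + (u n - u₀) ≤ τ₀) :
    ∃ C > (0:ℝ), ∃ N : ℕ, ∀ n ≥ N, ∀ t ≤ τ₀,
      |L (t + t * (v n - v₀) + (u n - u₀)) - L t| ≤ C * (|v n - v₀| + |u n - u₀|) := by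
  obtain ⟨c, hc⟩ := h3
  have hc0 : 0 ≤ c := le_trans (abs_nonneg _) (hc τ₀ le_rfl)
  set A : ℝ := min τ₀ (-4) with hA
  have hAτ : A ≤ τ₀ := min_le_left _ _
  have hA4 : A ≤ -4 := min_le_right _ _
  -- continuity of L' on the compact part
  have hcont : ContinuousOn L' (Set.Icc A τ₀) := fun x hx =>
    ((hder x hx.2).2.continuousAt).continuousWithinAt
  obtain ⟨M₁, hM₁⟩ := (isCompact_Icc).exists_bound_of_continuousOn hcont
  set M : ℝ := max M₁ c with hM
  have hM0 : 0 ≤ M := le_trans hc0 (le_max_right _ _)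
  -- global derivative bound on Iic τ₀
  have hMd : ∀ w ≤ τ₀, ‖L' w‖ ≤ M := by
    intro w hw
    rcases le_or_gt w A with h | h
    · have hw4 : w ≤ -4 := le_trans h hA4
      have h1w : (1:ℝ) ≤ |w| := by
        rw [abs_of_nonpos (by linarith)]; linarith
      have hcw := hc w hw
      rw [abs_mul] at hcw
      calc ‖L' w‖ = |L' w| := rfl
        _ ≤ |w| * |L' w| := le_mul_of_one_le_left (abs_nonneg _) h1w
        _ ≤ c := hcw
        _ ≤ M := le_max_right _ _
    · exact le_trans (hM₁ w ⟨h.le, hw⟩) (le_max_left _ _)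
  -- L is M-Lipschitz on Iic τ₀
  have hlip : ∀ x ∈ Set.Iic τ₀, ∀ y ∈ Set.Iic τ₀, ‖L y - L x‖ ≤ M * ‖y - x‖ := by
    intro x hx y hy
    exact Convex.norm_image_sub_le_of_norm_hasDerivWithin_le
      (fun w hw => ((hder w hw).1).hasDerivWithinAt)
      (fun w hw => hMd w hw) (convex_Iic τ₀) hx hy
  obtain ⟨N₀, hN₀⟩ := hdom
  obtain ⟨N₁, hN₁⟩ := Metric.tendsto_atTop.mp hv (1/2) (by norm_num)
  obtain ⟨N₂, hN₂⟩ := Metric.tendsto_atTop.mp hu 1 (by norm_num)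
  refine ⟨4*c + M*(|A| + |τ₀| + 1) + 1, by positivity, max N₀ (max N₁ N₂), ?_⟩
  intro n hn t ht
  set C : ℝ := 4*c + M*(|A| + |τ₀| + 1) + 1 with hCdef
  set δ : ℝ := v n - v₀ with hδdef
  set ε : ℝ := u n - u₀ with hεdef
  have hδ : |δ| ≤ 1/2 := by
    have := hN₁ n (le_trans (le_max_left N₁ N₂) (le_trans (le_max_right N₀ _) hn))
    rw [Real.dist_eq] at this; linarith
  have hε : |ε| ≤ 1 := by
    have := hN₂ n (le_trans (le_max_right N₁ N₂) (le_trans (le_max_right N₀ _) hn))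
    rw [Real.dist_eq] at this; linarith
  set s : ℝ := t + t * δ + ε with hsdef
  have hsτ : s ≤ τ₀ := hN₀ n (le_trans (le_max_left N₀ _) hn) t ht
  have hst : |s - t| ≤ |t| * |δ| + |ε| := by
    have : s - t = t * δ + ε := by ring
    rw [this]
    calc |t * δ + ε| ≤ |t * δ| + |ε| := abs_add_le _ _
      _ = |t| * |δ| + |ε| := by rw [abs_mul]
  have hδε0 : 0 ≤ |δ| + |ε| := by positivity
  rcases le_or_gt A t with hcase | hcase
  · -- compact case
    have htB : |t| ≤ |A| + |τ₀| := by
      rw [abs_le]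
      constructor
      · have := neg_abs_le A; linarith [abs_nonneg τ₀]
      · have := le_abs_self τ₀; linarith [abs_nonneg A]
    have h1 : |L s - L t| ≤ M * |s - t| := hlip t ht s hsτ
    have h2 : M * |s - t| ≤ M * ((|A| + |τ₀|) * |δ| + |ε|) := by
      apply mul_le_mul_of_nonneg_left _ hM0
      calc |s - t| ≤ |t| * |δ| + |ε| := hst
        _ ≤ (|A| + |τ₀|) * |δ| + |ε| :=
          add_le_add_left (mul_le_mul_of_nonneg_right htB (abs_nonneg _)) _
    calc |L s - L t| ≤ M * ((|A| + |τ₀|) * |δ| + |ε|) := le_trans h1 h2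
      _ ≤ C * (|δ| + |ε|) := by
        rw [hCdef]
        nlinarith [abs_nonneg δ, abs_nonneg ε, abs_nonneg A, abs_nonneg τ₀,
          mul_nonneg hM0 (abs_nonneg ε), mul_nonneg hM0 (abs_nonneg δ),
          mul_nonneg (mul_nonneg hM0 (add_nonneg (abs_nonneg A) (abs_nonneg τ₀))) (abs_nonneg ε)]
  · -- far-left case : t < A ≤ -4
    have ht4 : t ≤ -4 := le_trans hcase.le hA4
    have htneg : t < 0 := by linarith
    -- the interval containing t and s
    set S : Set ℝ := Set.Icc (3*t/2 - 1) (min (t/4) τ₀) with hS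
    have htδ : |t * δ| ≤ -t/2 := by
      rw [abs_mul, abs_of_neg htneg]
      nlinarith [abs_nonneg δ]
    have htδ' : -(-t/2) ≤ t * δ ∧ t * δ ≤ -t/2 := abs_le.mp htδ
    have hε' : -1 ≤ ε ∧ ε ≤ 1 := abs_le.mp hε
    have htS : t ∈ S := by
      refine ⟨by linarith, le_min (by linarith) ht⟩
    have hsS : s ∈ S := by
      refine ⟨by rw [hsdef]; linarith [htδ'.1, hε'.1], le_min ?_ hsτ⟩
      rw [hsdef]; linarith [htδ'.2, hε'.2]
    -- derivative bound on S
    have hbnd : ∀ w ∈ S, ‖L' w‖ ≤ 4*c/(-t) := by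
      intro w hw
      have hw4 : w ≤ t/4 := le_trans hw.2 (min_le_left _ _)
      have hwτ : w ≤ τ₀ := le_trans hw.2 (min_le_right _ _)
      have hwneg : w < 0 := by linarith
      have hwabs : -t/4 ≤ |w| := by rw [abs_of_neg hwneg]; linarith
      have hwabs0 : (0:ℝ) < -t/4 := by linarith
      have hcw := hc w hwτ
      rw [abs_mul] at hcw
      have hLw : |L' w| ≤ c / |w| := by
        rw [le_div_iff₀ (lt_of_lt_of_le hwabs0 hwabs)]
        calc |L' w| * |w| = |w| * |L' w| := by ring
          _ ≤ c := hcw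
      calc ‖L' w‖ = |L' w| := rfl
        _ ≤ c / |w| := hLw
        _ ≤ c / (-t/4) := div_le_div_of_nonneg_left hc0 hwabs0 hwabs |>.trans_eq rfl
        _ = 4*c/(-t) := by rw [div_div_eq_mul_div]; ring_nf
    have hmvt : ‖L s - L t‖ ≤ (4*c/(-t)) * ‖s - t‖ :=
      Convex.norm_image_sub_le_of_norm_hasDerivWithin_le
        (fun w hw => ((hder w (le_trans hw.2 (min_le_right _ _))).1).hasDerivWithinAt)
        hbnd (convex_Icc _ _) htS hsS
    have htpos : (0:ℝ) < -t := by linarith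
    have hstep : (4*c/(-t)) * |s - t| ≤ C * (|δ| + |ε|) := by
      rw [div_mul_eq_mul_div, div_le_iff₀ htpos]
      have habs : |t| = -t := abs_of_neg htneg
      have hst' : |s - t| ≤ -t * |δ| + |ε| := by rw [← habs]; exact hst
      have hC4c : 4*c ≤ C := by
        rw [hCdef]
        nlinarith [mul_nonneg hM0 (add_nonneg (add_nonneg (abs_nonneg A) (abs_nonneg τ₀)) zero_le_one)]
      have hCc : c ≤ C := by linarith
      -- 4c * |s-t| ≤ 4c * (-t|δ| + |ε|) = 4c(-t)|δ| + 4c|ε| ≤ C(-t)|δ| + C(-t)|ε|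
      have h1 : 4*c * |s - t| ≤ 4*c * (-t * |δ| + |ε|) :=
        mul_le_mul_of_nonneg_left hst' (by linarith)
      have hC0 : 0 ≤ C := le_trans hc0 hCc
      have h2a : 4*c ≤ C * (-t) := by nlinarith
      have h2 : 4*c * (-t * |δ| + |ε|) ≤ C * (|δ| + |ε|) * (-t) := by
        nlinarith [mul_nonneg (mul_nonneg (sub_nonneg.mpr hC4c) htpos.le) (abs_nonneg δ),
          mul_nonneg (sub_nonneg.mpr h2a) (abs_nonneg ε)]
      linarith
    calc |L s - L t| ≤ (4*c/(-t)) * |s - t| := hmvt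
      _ ≤ C * (|δ| + |ε|) := hstep
end
end
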